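/- arXiv:0712.3942 — 3 statements merged into one kernel-verified Lean document; each statement's English description precedes it below -/
import Mathlib

section
/- Let n ≥ 1 and let σ : [t₁, t₂] → ℝ × ℝⁿ (t₁ ≤ t₂) be a curve all of whose increments lie in the closed future causal cone, i.e. σ(s') − σ(s) ∈ C for all s ≤ s' in [t₁, t₂]. Then the total variation of σ on [t₁, t₂] with respect to the Euclidean distance is at most √2 · (σ⁰(t₂) − σ⁰(t₁)), where σ⁰ denotes the time component of σ. (This is the key flat-coordinate estimate in the proof of Lemma 2.3 of the paper, which bounds the Riemannian length of a causal curve by the increment of the time coordinate.) -/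
open Filter Set
open scoped BigOperators ENNReal

noncomputable section

/-! For `x` in the causal cone, `‖x̄‖ ≤ x⁰` gives `‖x‖ ≤ √2 x⁰`. Hence every increment
of `σ` is dominated by the corresponding increment of the nondecreasing real function
`√2 σ⁰`, so the variation of `σ` is at most that of `√2 σ⁰`, which telescopes to
`√2 (σ⁰(t₂) − σ⁰(t₁))`. -/

/-- Minkowski space modeled as `ℝ × ℝⁿ` with the Euclidean norm,
i.e. `EuclideanSpace ℝ (Fin (n+1))` with time component `x 0`. -/
abbrev Mink (n : ℕ) : Type := EuclideanSpace ℝ (Fin (n + 1))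

/-- The closed future causal cone `C = {x : x⁰ ≥ ‖x̄‖}`. -/
def causalCone (n : ℕ) : Set (Mink n) :=
  {x | Real.sqrt (∑ i : Fin n, x i.succ ^ 2) ≤ x 0}

theorem eVariationOn_le_of_edist_le {α E F : Type*} [LinearOrder α]
    [PseudoEMetricSpace E] [PseudoEMetricSpace F] {f : α → E} {g : α → F} {s : Set α}
    (h : ∀ ⦃x y⦄, x ∈ s → y ∈ s → x ≤ y → edist (f y) (f x) ≤ edist (g y) (g x)) :
    eVariationOn f s ≤ eVariationOn g s := by
  refine iSup_le fun ⟨m, u, hu, hus⟩ => ?_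
  calc ∑ i ∈ Finset.range m, edist (f (u (i + 1))) (f (u i))
      ≤ ∑ i ∈ Finset.range m, edist (g (u (i + 1))) (g (u i)) :=
        Finset.sum_le_sum fun i _ => h (hus i) (hus (i + 1)) (hu i.le_succ)
    _ ≤ eVariationOn g s := eVariationOn.sum_le hu hus

section causalCone

variable {n : ℕ} {x : Mink n}

theorem time_nonneg_of_mem_causalCone (hx : x ∈ causalCone n) : 0 ≤ x 0 :=
  (Real.sqrt_nonneg _).trans hx

theorem norm_le_sqrt_two_mul_of_mem_causalCone (hx : x ∈ causalCone n) :
    ‖x‖ ≤ Real.sqrt 2 * x 0 := by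
  have hspace : ∑ i : Fin n, x i.succ ^ 2 ≤ x 0 ^ 2 := (Real.sqrt_le_iff.1 hx).2
  have htime := time_nonneg_of_mem_causalCone hx
  rw [EuclideanSpace.norm_eq, Real.sqrt_le_left (by positivity), mul_pow,
    Real.sq_sqrt zero_le_two, Fin.sum_univ_succ]
  simp only [Real.norm_eq_abs, sq_abs]
  linarith

end causalCone

theorem flat_coordinate_estimate_general (n : ℕ) (t₁ t₂ : ℝ) (ht : t₁ ≤ t₂)
    (σ : ℝ → Mink n)
    (hC : ∀ ⦃s s'⦄, s ∈ Set.Icc t₁ t₂ → s' ∈ Set.Icc t₁ t₂ → s ≤ s' →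
      σ s' - σ s ∈ causalCone n) :
    eVariationOn σ (Set.Icc t₁ t₂) ≤
      ENNReal.ofReal (Real.sqrt 2 * (σ t₂ 0 - σ t₁ 0)) := by
  set τ : ℝ → ℝ := fun t => Real.sqrt 2 * σ t 0
  have hτ_mono : MonotoneOn τ (Icc t₁ t₂) := fun s hs s' hs' hss =>
    mul_le_mul_of_nonneg_left (sub_nonneg.1 (time_nonneg_of_mem_causalCone (hC hs hs' hss)))
      (Real.sqrt_nonneg 2)
  have hσ_le_τ : eVariationOn σ (Icc t₁ t₂) ≤ eVariationOn τ (Icc t₁ t₂) := by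
    refine eVariationOn_le_of_edist_le fun s s' hs hs' hss => ?_
    rw [edist_dist, edist_dist, dist_eq_norm, Real.dist_eq,
      abs_of_nonneg (sub_nonneg.2 (hτ_mono hs hs' hss)), ← mul_sub]
    exact ENNReal.ofReal_le_ofReal <| norm_le_sqrt_two_mul_of_mem_causalCone (hC hs hs' hss)
  have hτ : eVariationOn τ (Icc t₁ t₂) = ENNReal.ofReal (τ t₂ - τ t₁) := by
    simpa using hτ_mono.eVariationOn_eq (left_mem_Icc.2 ht) (right_mem_Icc.2 ht)
  rwa [hτ, ← mul_sub] at hσ_le_τ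

/-- If all increments of `σ` on `[t₁, t₂]` lie in the closed future causal cone,
then the total (Euclidean) variation of `σ` on `[t₁, t₂]` is at most
`√2 · (σ⁰(t₂) − σ⁰(t₁))`. -/
theorem flat_coordinate_estimate (n : ℕ) (hn : 1 ≤ n) (t₁ t₂ : ℝ) (ht : t₁ ≤ t₂)
    (σ : ℝ → Mink n)
    (hC : ∀ ⦃s s'⦄, s ∈ Set.Icc t₁ t₂ → s' ∈ Set.Icc t₁ t₂ → s ≤ s' →
      σ s' - σ s ∈ causalCone n) :
    eVariationOn σ (Set.Icc t₁ t₂) ≤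
      ENNReal.ofReal (Real.sqrt 2 * (σ t₂ 0 - σ t₁ 0)) :=
  flat_coordinate_estimate_general n t₁ t₂ ht σ hC
end
end

section
/- Let n ≥ 1 and let γₙ : [a, b] → ℝ × ℝⁿ (a < b) be future-directed causal curves converging pointwise on [a, b] to a map γ : [a, b] → ℝ × ℝⁿ. Then every increment γ(t₂) − γ(t₁) (t₁ < t₂) of γ lies in the closed future causal cone C, so the Lorentzian length L(γ) is defined, and limsup_{n→∞} L(γₙ) ≤ L(γ). (This is the Minkowski-space instance of Theorem 2.4(a) of the paper: upper semicontinuity of the Lorentzian length functional.) -/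
/-!
The causal cone is closed, so increments of the pointwise limit remain causal. For a fixed
partition, the partition sum depends continuously on the finitely many curve values it involves,
so `L(γₖ)` is bounded by partition sums converging to that of `γ`; hence `limsup L(γₖ)` is at most
every partition sum of `γ`, and thus at most their infimum `L(γ)`.
-/

open Filter Set
open scoped BigOperators ENNReal

noncomputable section

/-- The Lorentzian quadratic form `q(x) = (x⁰)² − ‖x̄‖²`. -/
def qform (n : ℕ) (x : Mink n) : ℝ :=
  x 0 ^ 2 - ∑ i : Fin n, x i.succ ^ 2

/-- `γ` is a future-directed causal curve on the set `s`. -/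
def FDCausal (n : ℕ) (γ : ℝ → Mink n) (s : Set ℝ) : Prop :=
  ∀ ⦃t₁⦄, t₁ ∈ s → ∀ ⦃t₂⦄, t₂ ∈ s → t₁ < t₂ →
    γ t₂ - γ t₁ ∈ causalCone n ∧ γ t₂ ≠ γ t₁

/-- The Lorentzian length of `γ` on `[a, b]`: the infimum over finite partitions
`a = t₀ < t₁ < ⋯ < t_m = b` of `Σᵢ √(q(γ(tᵢ₊₁) − γ(tᵢ)))`. -/
def LLength (n : ℕ) (γ : ℝ → Mink n) (a b : ℝ) : ℝ :=
  sInf { L : ℝ | ∃ (m : ℕ) (t : Fin (m + 1) → ℝ), StrictMono t ∧ t 0 = a ∧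
    t (Fin.last m) = b ∧
    L = ∑ i : Fin m, Real.sqrt (qform n (γ (t i.succ) - γ (t i.castSucc))) }

def partitionSum (n : ℕ) (γ : ℝ → Mink n) {m : ℕ} (t : Fin (m + 1) → ℝ) : ℝ :=
  ∑ i : Fin m, Real.sqrt (qform n (γ (t i.succ) - γ (t i.castSucc)))

lemma continuous_qform (n : ℕ) : Continuous (qform n) := by
  unfold qform
  fun_prop

lemma isClosed_causalCone (n : ℕ) : IsClosed (causalCone n) :=
  isClosed_le (by fun_prop) (by fun_prop)

lemma partitionSum_nonneg (n : ℕ) (γ : ℝ → Mink n) {m : ℕ} (t : Fin (m + 1) → ℝ) :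
    0 ≤ partitionSum n γ t :=
  Finset.sum_nonneg fun _ _ => Real.sqrt_nonneg _

lemma LLength_nonneg (n : ℕ) (γ : ℝ → Mink n) (a b : ℝ) : 0 ≤ LLength n γ a b :=
  Real.sInf_nonneg <| by
    rintro L ⟨m, t, -, -, -, rfl⟩
    exact partitionSum_nonneg n γ t

lemma LLength_le_partitionSum (n : ℕ) (γ : ℝ → Mink n) {a b : ℝ} {m : ℕ}
    {t : Fin (m + 1) → ℝ} (ht : StrictMono t) (h0 : t 0 = a) (hm : t (Fin.last m) = b) :
    LLength n γ a b ≤ partitionSum n γ t :=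
  csInf_le ⟨0, by rintro L ⟨m, t, -, -, -, rfl⟩; exact partitionSum_nonneg n γ t⟩
    ⟨m, t, ht, h0, hm, rfl⟩

lemma le_LLength (n : ℕ) (γ : ℝ → Mink n) {a b : ℝ} (hab : a < b) {c : ℝ}
    (h : ∀ (m : ℕ) (t : Fin (m + 1) → ℝ), StrictMono t → t 0 = a → t (Fin.last m) = b →
      c ≤ partitionSum n γ t) :
    c ≤ LLength n γ a b := by
  refine le_csInf ⟨_, 1, ![a, b], ?_, rfl, rfl, rfl⟩ ?_
  · simpa [Fin.strictMono_iff_lt_succ] using hab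
  · rintro L ⟨m, t, ht, h0, hm, rfl⟩
    exact h m t ht h0 hm

lemma StrictMono.mem_Icc_of_endpoints {m : ℕ} {t : Fin (m + 1) → ℝ} {a b : ℝ}
    (ht : StrictMono t) (h0 : t 0 = a) (hm : t (Fin.last m) = b) (i : Fin (m + 1)) :
    t i ∈ Icc a b :=
  ⟨h0 ▸ ht.monotone (Fin.zero_le i), hm ▸ ht.monotone (Fin.le_last i)⟩

lemma tendsto_partitionSum {ι : Type*} {l : Filter ι} (n : ℕ) {γs : ι → ℝ → Mink n}
    {γ : ℝ → Mink n} {m : ℕ} {t : Fin (m + 1) → ℝ}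
    (h : ∀ i, Tendsto (fun k => γs k (t i)) l (nhds (γ (t i)))) :
    Tendsto (fun k => partitionSum n (γs k) t) l (nhds (partitionSum n γ t)) :=
  tendsto_finsetSum _ fun i _ =>
    ((Real.continuous_sqrt.comp (continuous_qform n)).tendsto _).comp
      ((h i.succ).sub (h i.castSucc))

lemma limsup_le_of_le_of_tendsto {α ι : Type*} [ConditionallyCompleteLinearOrder α]
    [TopologicalSpace α] [OrderTopology α] {l : Filter ι} [l.NeBot] {f g : ι → α} {x : α}
    (hf : l.IsBoundedUnder (· ≥ ·) f) (hfg : f ≤ᶠ[l] g) (hg : Tendsto g l (nhds x)) :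
    limsup f l ≤ x :=
  (limsup_le_limsup hfg hf.isCoboundedUnder_le hg.isBoundedUnder_le).trans_eq hg.limsup_eq

theorem length_upper_semicontinuous_general (n : ℕ) (a b : ℝ) (hab : a < b)
    (γseq : ℕ → ℝ → Mink n) (γ : ℝ → Mink n)
    (hcausal : ∀ m, FDCausal n (γseq m) (Set.Icc a b))
    (hconv : ∀ t ∈ Set.Icc a b,
      Filter.Tendsto (fun m => γseq m t) Filter.atTop (nhds (γ t))) :
    (∀ ⦃t₁⦄, t₁ ∈ Set.Icc a b → ∀ ⦃t₂⦄, t₂ ∈ Set.Icc a b → t₁ < t₂ →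
      γ t₂ - γ t₁ ∈ causalCone n) ∧
    Filter.limsup (fun m => LLength n (γseq m) a b) Filter.atTop ≤ LLength n γ a b := by
  refine ⟨fun t₁ h₁ t₂ h₂ hlt => ?_, le_LLength n γ hab fun m t ht h0 hm => ?_⟩
  · exact (isClosed_causalCone n).mem_of_tendsto ((hconv t₂ h₂).sub (hconv t₁ h₁))
      (Eventually.of_forall fun k => (hcausal k h₁ h₂ hlt).1)
  · exact limsup_le_of_le_of_tendsto
      (isBoundedUnder_of ⟨0, fun k => LLength_nonneg n (γseq k) a b⟩)
      (Eventually.of_forall fun k => LLength_le_partitionSum n (γseq k) ht h0 hm)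
      (tendsto_partitionSum n fun i => hconv _ (ht.mem_Icc_of_endpoints h0 hm i))

/-- Upper semicontinuity of the Lorentzian length functional: if future-directed causal
curves `γₙ : [a,b] → ℝ × ℝⁿ` converge pointwise to `γ`, then all increments of `γ`
lie in the causal cone and `limsup L(γₙ) ≤ L(γ)`. -/
theorem length_upper_semicontinuous (n : ℕ) (hn : 1 ≤ n) (a b : ℝ) (hab : a < b)
    (γseq : ℕ → ℝ → Mink n) (γ : ℝ → Mink n)
    (hcausal : ∀ m, FDCausal n (γseq m) (Set.Icc a b))
    (hconv : ∀ t ∈ Set.Icc a b,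
      Filter.Tendsto (fun m => γseq m t) Filter.atTop (nhds (γ t))) :
    (∀ ⦃t₁⦄, t₁ ∈ Set.Icc a b → ∀ ⦃t₂⦄, t₂ ∈ Set.Icc a b → t₁ < t₂ →
      γ t₂ - γ t₁ ∈ causalCone n) ∧
    Filter.limsup (fun m => LLength n (γseq m) a b) Filter.atTop ≤ LLength n γ a b :=
  length_upper_semicontinuous_general n a b hab γseq γ hcausal hconv
end
end

section
/- Let n ≥ 1 and let γₙ : [a, b] → ℝ × ℝⁿ (a < b) be future-directed causal curves converging pointwise on [a, b] to γ : [a, b] → ℝ × ℝⁿ, and suppose the sequence is limit maximizing in the following sense: setting εₙ = sup_{a ≤ t₁ < t₂ ≤ b} [ √(q(γₙ(t₂) − γₙ(t₁))) − L(γₙ|[t₁,t₂]) ] (which is ≥ 0), one has εₙ → 0. Then γ is maximizing: for all a ≤ t₁ < t₂ ≤ b, the increment γ(t₂) − γ(t₁) lies in C and L(γ|[t₁,t₂]) = √(q(γ(t₂) − γ(t₁))). (This is the Minkowski-space instance of Theorem 2.12 of the paper: a pointwise limit of a limit maximizing sequence of causal curves is a maximizing causal curve; note that in Minkowski space the Lorentzian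 distance between causally related points x ≤ z equals √(q(z − x)).) -/
open Filter Set
open scoped BigOperators ENNReal

noncomputable section

lemma mink_coord_cont (n : ℕ) (i : Fin (n+1)) :
    Continuous fun x : Mink n => x i :=
  (EuclideanSpace.proj i).continuous

lemma sqrtq_cont (n : ℕ) : Continuous fun x : Mink n => Real.sqrt (qform n x) := by
  apply Real.continuous_sqrt.comp
  unfold qform
  exact ((mink_coord_cont n 0).pow 2).sub
    (continuous_finset_sum _ fun i _ => (mink_coord_cont n i.succ).pow 2)

lemma llength_mem_nonneg (n : ℕ) (g : ℝ → Mink n) (c d L : ℝ)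
    (hL : L ∈ { L : ℝ | ∃ (m : ℕ) (t : Fin (m + 1) → ℝ), StrictMono t ∧ t 0 = c ∧
      t (Fin.last m) = d ∧
      L = ∑ i : Fin m, Real.sqrt (qform n (g (t i.succ) - g (t i.castSucc))) }) :
    0 ≤ L := by
  obtain ⟨m, t, _, _, _, rfl⟩ := hL
  exact Finset.sum_nonneg fun i _ => Real.sqrt_nonneg _

/-- A pointwise limit of a limit maximizing sequence of future-directed causal curves
is maximizing: on each subinterval its Lorentzian length equals `√(q(γ(t₂) − γ(t₁)))`,
the Lorentzian distance between its (causally related) endpoints. -/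
theorem limit_maximizing_implies_maximizing (n : ℕ) (hn : 1 ≤ n) (a b : ℝ) (hab : a < b)
    (γseq : ℕ → ℝ → Mink n) (γ : ℝ → Mink n)
    (hcausal : ∀ m, FDCausal n (γseq m) (Set.Icc a b))
    (hconv : ∀ t ∈ Set.Icc a b,
      Filter.Tendsto (fun m => γseq m t) Filter.atTop (nhds (γ t)))
    (ε : ℕ → ℝ)
    (hbound : ∀ m, ∀ ⦃t₁⦄, t₁ ∈ Set.Icc a b → ∀ ⦃t₂⦄, t₂ ∈ Set.Icc a b → t₁ < t₂ →
      Real.sqrt (qform n (γseq m t₂ - γseq m t₁)) - LLength n (γseq m) t₁ t₂ ≤ ε m)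
    (hε : Filter.Tendsto ε Filter.atTop (nhds 0)) :
    ∀ ⦃t₁⦄, t₁ ∈ Set.Icc a b → ∀ ⦃t₂⦄, t₂ ∈ Set.Icc a b → t₁ < t₂ →
      γ t₂ - γ t₁ ∈ causalCone n ∧
      LLength n γ t₁ t₂ = Real.sqrt (qform n (γ t₂ - γ t₁)) := by
  intro t₁ ht₁ t₂ ht₂ h12
  -- convergence of increments
  have hinc : ∀ u ∈ Set.Icc a b, ∀ v ∈ Set.Icc a b,
      Filter.Tendsto (fun k => γseq k v - γseq k u) Filter.atTop (nhds (γ v - γ u)) :=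
    fun u hu v hv => (hconv v hv).sub (hconv u hu)
  have key : ∀ u ∈ Set.Icc a b, ∀ v ∈ Set.Icc a b,
      Filter.Tendsto (fun k => Real.sqrt (qform n (γseq k v - γseq k u))) Filter.atTop
        (nhds (Real.sqrt (qform n (γ v - γ u)))) :=
    fun u hu v hv => ((sqrtq_cont n).tendsto _).comp (hinc u hu v hv)
  -- cone membership
  have hcone : γ t₂ - γ t₁ ∈ causalCone n := by
    have h1 : Filter.Tendsto
        (fun k => Real.sqrt (∑ i : Fin n, (γseq k t₂ - γseq k t₁) i.succ ^ 2)) Filter.atTop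
        (nhds (Real.sqrt (∑ i : Fin n, (γ t₂ - γ t₁) i.succ ^ 2))) := by
      have hc : Continuous fun x : Mink n => Real.sqrt (∑ i : Fin n, x i.succ ^ 2) :=
        Real.continuous_sqrt.comp
          (continuous_finset_sum _ fun i _ => (mink_coord_cont n i.succ).pow 2)
      exact (hc.tendsto _).comp (hinc t₁ ht₁ t₂ ht₂)
    have h2 : Filter.Tendsto (fun k => (γseq k t₂ - γseq k t₁) 0) Filter.atTop
        (nhds ((γ t₂ - γ t₁) 0)) :=
      ((mink_coord_cont n 0).tendsto _).comp (hinc t₁ ht₁ t₂ ht₂)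
    exact le_of_tendsto_of_tendsto' h1 h2 fun k => (hcausal k ht₁ ht₂ h12).1
  refine ⟨hcone, ?_⟩
  -- the key lower bound: every partition sum for γ is ≥ √q(γ t₂ - γ t₁)
  have hlow : ∀ L ∈ { L : ℝ | ∃ (m : ℕ) (t : Fin (m + 1) → ℝ), StrictMono t ∧ t 0 = t₁ ∧
      t (Fin.last m) = t₂ ∧
      L = ∑ i : Fin m, Real.sqrt (qform n (γ (t i.succ) - γ (t i.castSucc))) },
      Real.sqrt (qform n (γ t₂ - γ t₁)) ≤ L := by
    rintro L ⟨m, t, hmono, h0, hl, rfl⟩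
    have htmem : ∀ i : Fin (m+1), t i ∈ Set.Icc a b := by
      intro i
      constructor
      · exact le_trans ht₁.1 (h0 ▸ hmono.monotone (Fin.zero_le i))
      · exact le_trans (hl ▸ hmono.monotone (Fin.le_last i)) ht₂.2
    have hstep : ∀ k : ℕ,
        Real.sqrt (qform n (γseq k t₂ - γseq k t₁)) - ε k ≤
        ∑ i : Fin m, Real.sqrt (qform n (γseq k (t i.succ) - γseq k (t i.castSucc))) := by
      intro k
      have h1 : LLength n (γseq k) t₁ t₂ ≤
          ∑ i : Fin m, Real.sqrt (qform n (γseq k (t i.succ) - γseq k (t i.castSucc))) := by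
        apply csInf_le ⟨0, fun L hL => llength_mem_nonneg n (γseq k) t₁ t₂ L hL⟩
        exact ⟨m, t, hmono, h0, hl, rfl⟩
      have h2 := hbound k ht₁ ht₂ h12
      linarith
    have hL1 : Filter.Tendsto
        (fun k => Real.sqrt (qform n (γseq k t₂ - γseq k t₁)) - ε k) Filter.atTop
        (nhds (Real.sqrt (qform n (γ t₂ - γ t₁)))) := by
      have := (key t₁ ht₁ t₂ ht₂).sub hε
      simpa using this
    have hL2 : Filter.Tendsto
        (fun k => ∑ i : Fin m,
          Real.sqrt (qform n (γseq k (t i.succ) - γseq k (t i.castSucc)))) Filter.atTop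
        (nhds (∑ i : Fin m, Real.sqrt (qform n (γ (t i.succ) - γ (t i.castSucc))))) :=
      tendsto_finset_sum _ fun i _ =>
        key (t i.castSucc) (htmem _) (t i.succ) (htmem _)
    exact le_of_tendsto_of_tendsto' hL1 hL2 hstep
  -- the trivial partition
  have hmem : Real.sqrt (qform n (γ t₂ - γ t₁)) ∈
      { L : ℝ | ∃ (m : ℕ) (t : Fin (m + 1) → ℝ), StrictMono t ∧ t 0 = t₁ ∧
        t (Fin.last m) = t₂ ∧
        L = ∑ i : Fin m, Real.sqrt (qform n (γ (t i.succ) - γ (t i.castSucc))) } := by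
    refine ⟨1, ![t₁, t₂], ?_, rfl, rfl, ?_⟩
    · rw [Fin.strictMono_iff_lt_succ]
      intro i
      fin_cases i
      simpa using h12
    · simp [Fin.sum_univ_one]
  unfold LLength
  exact le_antisymm (csInf_le ⟨_, hlow⟩ hmem) (le_csInf ⟨_, hmem⟩ hlow)
end
end
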